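/- Let f, g : I → ℝ be n times differentiable functions. Then for all x, y ∈ I and all n ≥ 1, the n-th partial derivative of D_{f,g}(x,y) with respect to the first variable equals Σ_{k=0}^{n−1} 2^{−k} C(n,k) · [ f^{(k)}((x+y)/2) g^{(n−k)}(x) − g^{(k)}((x+y)/2) f^{(n−k)}(x) ] + 2^{−n} · [ f^{(n)}((x+y)/2)(g(x)+g(y)) − g^{(n)}((x+y)/2)(f(x)+f(y)) ]. -/

import Mathlib

/-- The two-variable determinant expression
`D_{f,g}(x,y) = f((x+y)/2)·(g(x)+g(y)) − g((x+y)/2)·(f(x)+f(y))`. -/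
noncomputable def Dfg (f g : ℝ → ℝ) (x y : ℝ) : ℝ :=
  f ((x + y) / 2) * (g x + g y) - g ((x + y) / 2) * (f x + f y)

/-!
Fix `y` and write `t ↦ D_{f,g}(t, y)` as `F · (g + g y) - G · (f + f y)` with
`F t = f ((t + y) / 2)` and `G t = g ((t + y) / 2)`. By the chain rule
`F⁽ᵏ⁾ t = 2⁻ᵏ f⁽ᵏ⁾ ((t + y) / 2)`, and `g + g y` has the derivatives of `g` in every positive
order, so the formula is the Leibniz rule for the two products, with the term `k = n` split off.
The Leibniz rule (and additivity of `iteratedDeriv`) is needed for functions that are merely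
`n` times differentiable on an open set, whereas `iteratedDeriv_mul` assumes `Cⁿ`; it follows by
induction on `n`, since on an open set iterated derivatives only depend on the function near the
point.
-/

open Finset Set

section IteratedDeriv

variable {𝕜 F 𝔸 : Type*} [NontriviallyNormedField 𝕜] [NormedAddCommGroup F] [NormedSpace 𝕜 F]
  [NormedRing 𝔸] [NormedAlgebra 𝕜 𝔸] {s : Set 𝕜} {n : ℕ}

theorem iteratedDeriv_comp_mul_left (n : ℕ) (f : 𝕜 → F) (c : 𝕜) :
    iteratedDeriv n (fun x => f (c * x)) = fun x => c ^ n • iteratedDeriv n f (c * x) := by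
  induction n with
  | zero => simp
  | succ n ih =>
    funext x
    rw [iteratedDeriv_succ, ih, deriv_fun_const_smul_field,
      deriv_comp_mul_left c (iteratedDeriv n f), ← iteratedDeriv_succ, pow_succ, mul_smul]

theorem iteratedDeriv_add_const {k : ℕ} (hk : 0 < k) (f : 𝕜 → F) (c : F) :
    iteratedDeriv k (fun x => f x + c) = iteratedDeriv k f := by
  funext x
  simpa only [add_comm] using iteratedDeriv_const_add hk c (f := f) (x := x)

theorem DifferentiableOn.iteratedDeriv_add_const {k : ℕ} {f : 𝕜 → F}
    (hf : DifferentiableOn 𝕜 (iteratedDeriv k f) s) (c : F) :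
    DifferentiableOn 𝕜 (iteratedDeriv k (fun x => f x + c)) s := by
  rcases Nat.eq_zero_or_pos k with rfl | hk
  · simpa using hf.add_const c
  · rwa [_root_.iteratedDeriv_add_const hk]

theorem iteratedDeriv_sub_eqOn {u v : 𝕜 → F} (hs : IsOpen s)
    (hu : ∀ k < n, DifferentiableOn 𝕜 (iteratedDeriv k u) s)
    (hv : ∀ k < n, DifferentiableOn 𝕜 (iteratedDeriv k v) s) :
    EqOn (iteratedDeriv n (u - v)) (iteratedDeriv n u - iteratedDeriv n v) s := by
  induction n with
  | zero => intro x _; simp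
  | succ n ih =>
    intro x hx
    have hnx := hs.mem_nhds hx
    rw [iteratedDeriv_succ, ((ih (fun k hk => hu k (by omega)) fun k hk => hv k (by omega)
      ).eventuallyEq_of_mem hnx).deriv_eq, deriv_sub ((hu n n.lt_succ_self).differentiableAt hnx)
      ((hv n n.lt_succ_self).differentiableAt hnx)]
    simp only [Pi.sub_apply, iteratedDeriv_succ]

theorem iteratedDeriv_mul_eqOn {u v : 𝕜 → 𝔸} (hs : IsOpen s)
    (hu : ∀ k < n, DifferentiableOn 𝕜 (iteratedDeriv k u) s)
    (hv : ∀ k < n, DifferentiableOn 𝕜 (iteratedDeriv k v) s) :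
    EqOn (iteratedDeriv n (u * v)) (fun x => ∑ i ∈ range (n + 1),
      (n.choose i : 𝔸) * (iteratedDeriv i u x * iteratedDeriv (n - i) v x)) s := by
  induction n with
  | zero => intro x _; simp
  | succ n ih =>
    intro x hx
    have hnx := hs.mem_nhds hx
    have hderiv {w : 𝕜 → 𝔸} (hw : ∀ k < n + 1, DifferentiableOn 𝕜 (iteratedDeriv k w) s)
        {k : ℕ} (hk : k ≤ n) : HasDerivAt (iteratedDeriv k w) (iteratedDeriv (k + 1) w x) x := by
      rw [iteratedDeriv_succ]
      exact ((hw k (by omega)).differentiableAt hnx).hasDerivAt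
    have hsum : HasDerivAt (fun x => ∑ i ∈ range (n + 1),
          (n.choose i : 𝔸) * (iteratedDeriv i u x * iteratedDeriv (n - i) v x))
        (∑ i ∈ range (n + 1), (n.choose i : 𝔸) *
          (iteratedDeriv (i + 1) u x * iteratedDeriv (n - i) v x +
            iteratedDeriv i u x * iteratedDeriv (n - i + 1) v x)) x :=
      HasDerivAt.fun_sum fun i hi =>
        ((hderiv hu (Nat.lt_succ_iff.mp (mem_range.mp hi))).mul
          (hderiv hv (Nat.sub_le n i))).const_mul _
    rw [iteratedDeriv_succ, ((ih (fun k hk => hu k (by omega)) fun k hk => hv k (by omega)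
      ).eventuallyEq_of_mem hnx).deriv_eq, hsum.deriv]
    beta_reduce
    rw [Finset.sum_choose_succ_mul (fun i j => iteratedDeriv i u x * iteratedDeriv j v x)]
    simp only [mul_add, sum_add_distrib]
    refine (add_comm _ _).trans (congrArg (· + _) (sum_congr rfl fun i hi => ?_))
    rw [Nat.sub_add_comm (Nat.lt_succ_iff.mp (mem_range.mp hi))]

theorem DifferentiableOn.iteratedDeriv_mul {u v : 𝕜 → 𝔸} (hs : IsOpen s)
    (hu : ∀ k ≤ n, DifferentiableOn 𝕜 (iteratedDeriv k u) s)
    (hv : ∀ k ≤ n, DifferentiableOn 𝕜 (iteratedDeriv k v) s) :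
    DifferentiableOn 𝕜 (iteratedDeriv n (u * v)) s := by
  intro x hx
  have hnx := hs.mem_nhds hx
  refine DifferentiableAt.differentiableWithinAt (DifferentiableAt.congr_of_eventuallyEq ?_
    ((iteratedDeriv_mul_eqOn hs (fun k hk => hu k hk.le) fun k hk => hv k hk.le
      ).eventuallyEq_of_mem hnx))
  exact DifferentiableAt.fun_sum fun i hi =>
    (((hu i (Nat.lt_succ_iff.mp (mem_range.mp hi))).differentiableAt hnx).mul
      ((hv (n - i) (Nat.sub_le n i)).differentiableAt hnx)).const_mul _

end IteratedDeriv

section Midpoint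

variable {I : Set ℝ} {f g : ℝ → ℝ} {y : ℝ} {n : ℕ}

theorem Set.OrdConnected.add_div_two_mem (hI : I.OrdConnected) {x : ℝ} (hx : x ∈ I)
    (hy : y ∈ I) : (x + y) / 2 ∈ I := by
  simpa [midpoint_eq_smul_add, div_eq_inv_mul] using (hI.convex (𝕜 := ℝ)).midpoint_mem hx hy

theorem iteratedDeriv_comp_add_div_two (n : ℕ) (f : ℝ → ℝ) (y : ℝ) :
    iteratedDeriv n (fun t => f ((t + y) / 2)) =
      fun t => 1 / 2 ^ n * iteratedDeriv n f ((t + y) / 2) := by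
  have hcomp : (fun t => f ((t + y) / 2)) = fun t => (fun z => f (2⁻¹ * z)) (t + y) := by
    simp only [div_eq_inv_mul]
  rw [hcomp, iteratedDeriv_comp_add_const n (fun z => f (2⁻¹ * z)) y, iteratedDeriv_comp_mul_left]
  simp only [smul_eq_mul, inv_pow, div_eq_inv_mul, mul_one]

theorem DifferentiableOn.iteratedDeriv_comp_add_div_two {k : ℕ} (hI : I.OrdConnected)
    (hy : y ∈ I) (hf : DifferentiableOn ℝ (iteratedDeriv k f) I) :
    DifferentiableOn ℝ (iteratedDeriv k (fun t => f ((t + y) / 2))) I := by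
  rw [_root_.iteratedDeriv_comp_add_div_two]
  exact (hf.comp (by fun_prop) fun t ht => hI.add_div_two_mem ht hy).const_mul _

theorem DifferentiableOn.iteratedDeriv_comp_add_div_two_mul (hIo : IsOpen I)
    (hI : I.OrdConnected) (hy : y ∈ I) (hf : ∀ k < n, DifferentiableOn ℝ (iteratedDeriv k f) I)
    (hg : ∀ k < n, DifferentiableOn ℝ (iteratedDeriv k g) I) :
    ∀ k < n, DifferentiableOn ℝ (iteratedDeriv k (fun t => f ((t + y) / 2) * (g t + g y))) I :=
  fun k hk => DifferentiableOn.iteratedDeriv_mul hIo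
    (fun j hj => (hf j (by omega)).iteratedDeriv_comp_add_div_two hI hy)
    (fun j hj => (hg j (by omega)).iteratedDeriv_add_const _)

theorem iteratedDeriv_comp_add_div_two_mul_eqOn (hIo : IsOpen I) (hI : I.OrdConnected)
    (hy : y ∈ I) (hf : ∀ k < n, DifferentiableOn ℝ (iteratedDeriv k f) I)
    (hg : ∀ k < n, DifferentiableOn ℝ (iteratedDeriv k g) I) :
    EqOn (iteratedDeriv n (fun t => f ((t + y) / 2) * (g t + g y)))
      (fun x => ∑ k ∈ range n, 1 / 2 ^ k * (n.choose k : ℝ) *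
          (iteratedDeriv k f ((x + y) / 2) * iteratedDeriv (n - k) g x) +
        1 / 2 ^ n * (iteratedDeriv n f ((x + y) / 2) * (g x + g y))) I := by
  intro x hx
  rw [show (fun t => f ((t + y) / 2) * (g t + g y)) =
      (fun t => f ((t + y) / 2)) * fun t => g t + g y from rfl,
    iteratedDeriv_mul_eqOn hIo (fun k hk => (hf k hk).iteratedDeriv_comp_add_div_two hI hy)
      (fun k hk => (hg k hk).iteratedDeriv_add_const _) hx]
  beta_reduce
  rw [sum_range_succ]
  simp only [iteratedDeriv_comp_add_div_two, Nat.choose_self, Nat.cast_one, Nat.sub_self,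
    iteratedDeriv_zero, one_mul]
  congr 1
  · refine sum_congr rfl fun k hk => ?_
    rw [iteratedDeriv_add_const (Nat.sub_pos_of_lt (mem_range.mp hk))]
    ring
  · ring

end Midpoint

theorem stmt11_general (I : Set ℝ) (hIopen : IsOpen I) (hIconn : I.OrdConnected)
    (f g : ℝ → ℝ) (n : ℕ)
    (hf : ∀ k < n, ∀ x ∈ I, DifferentiableAt ℝ (iteratedDeriv k f) x)
    (hg : ∀ k < n, ∀ x ∈ I, DifferentiableAt ℝ (iteratedDeriv k g) x) :
    ∀ x ∈ I, ∀ y ∈ I,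
      iteratedDeriv n (fun t => Dfg f g t y) x =
        (∑ k ∈ Finset.range n, (1 / 2 ^ k : ℝ) * (n.choose k : ℝ) *
          (iteratedDeriv k f ((x + y) / 2) * iteratedDeriv (n - k) g x -
            iteratedDeriv k g ((x + y) / 2) * iteratedDeriv (n - k) f x)) +
        (1 / 2 ^ n : ℝ) *
          (iteratedDeriv n f ((x + y) / 2) * (g x + g y) -
            iteratedDeriv n g ((x + y) / 2) * (f x + f y)) := by
  intro x hx y hy
  have hfI : ∀ k < n, DifferentiableOn ℝ (iteratedDeriv k f) I :=
    fun k hk t ht => (hf k hk t ht).differentiableWithinAt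
  have hgI : ∀ k < n, DifferentiableOn ℝ (iteratedDeriv k g) I :=
    fun k hk t ht => (hg k hk t ht).differentiableWithinAt
  rw [show (fun t => Dfg f g t y) = (fun t => f ((t + y) / 2) * (g t + g y)) -
      fun t => g ((t + y) / 2) * (f t + f y) from rfl,
    iteratedDeriv_sub_eqOn hIopen
      (DifferentiableOn.iteratedDeriv_comp_add_div_two_mul hIopen hIconn hy hfI hgI)
      (DifferentiableOn.iteratedDeriv_comp_add_div_two_mul hIopen hIconn hy hgI hfI) hx,
    Pi.sub_apply, iteratedDeriv_comp_add_div_two_mul_eqOn hIopen hIconn hy hfI hgI hx,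
    iteratedDeriv_comp_add_div_two_mul_eqOn hIopen hIconn hy hgI hfI hx]
  simp only [mul_sub, sum_sub_distrib]
  ring

/-- Let `f, g : I → ℝ` be `n` times differentiable functions.  Then for
all `x, y ∈ I` and all `n ≥ 1`, the `n`-th partial derivative of `D_{f,g}(x,y)` with respect
to the first variable equals
`Σ_{k=0}^{n−1} 2^{−k} C(n,k) · [ f^{(k)}((x+y)/2) g^{(n−k)}(x) − g^{(k)}((x+y)/2) f^{(n−k)}(x) ]`
`+ 2^{−n} · [ f^{(n)}((x+y)/2)(g(x)+g(y)) − g^{(n)}((x+y)/2)(f(x)+f(y)) ]`. -/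
theorem stmt11 (I : Set ℝ) (hIopen : IsOpen I) (hIconn : I.OrdConnected)
    (hIne : I.Nonempty) (f g : ℝ → ℝ) (n : ℕ) (hn : 1 ≤ n)
    (hf : ∀ k < n, ∀ x ∈ I, DifferentiableAt ℝ (iteratedDeriv k f) x)
    (hg : ∀ k < n, ∀ x ∈ I, DifferentiableAt ℝ (iteratedDeriv k g) x) :
    ∀ x ∈ I, ∀ y ∈ I,
      iteratedDeriv n (fun t => Dfg f g t y) x =
        (∑ k ∈ Finset.range n, (1 / 2 ^ k : ℝ) * (n.choose k : ℝ) *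
          (iteratedDeriv k f ((x + y) / 2) * iteratedDeriv (n - k) g x -
            iteratedDeriv k g ((x + y) / 2) * iteratedDeriv (n - k) f x)) +
        (1 / 2 ^ n : ℝ) *
          (iteratedDeriv n f ((x + y) / 2) * (g x + g y) -
            iteratedDeriv n g ((x + y) / 2) * (f x + f y)) :=
  stmt11_general I hIopen hIconn f g n hf hg
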